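/- arXiv:2109.10990 — 5 statements merged into one kernel-verified Lean document; each statement's English description precedes it below -/
import Mathlib

section
/- Let A be an N×N matrix over ℝ ∪ {+∞}, λ ∈ ℝ, and v ∈ ℝ^N a finite vector with min_j (A_{ij} + v_j) = λ + v_i for all i. Then every circuit of G(A) has average weight at least λ. -/
open scoped BigOperators

/-- Min-plus product of matrices over ℝ ∪ {+∞}: `(A ⊙ B) i j = min_k (A i k + B k j)`. -/
def mpMul {N : ℕ} (A B : Matrix (Fin N) (Fin N) (WithTop ℝ)) :
    Matrix (Fin N) (Fin N) (WithTop ℝ) :=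
  fun i j => Finset.univ.inf fun k => A i k + B k j

/-- The min-plus identity matrix: `0` on the diagonal, `+∞` elsewhere. -/
def mpId {N : ℕ} : Matrix (Fin N) (Fin N) (WithTop ℝ) :=
  fun i j => if i = j then 0 else ⊤

/-- Min-plus matrix powers. -/
def mpPow {N : ℕ} (A : Matrix (Fin N) (Fin N) (WithTop ℝ)) : ℕ → Matrix (Fin N) (Fin N) (WithTop ℝ)
  | 0 => mpId
  | k + 1 => mpMul A (mpPow A k)

/-- `IsWalk A l v j i` : `v` is a walk of length `l` from node `j` to node `i` in the
weighted digraph `G(A)`, where there is an edge from `b` to `a` whenever `A a b ≠ +∞`. -/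
def IsWalk {N : ℕ} (A : Matrix (Fin N) (Fin N) (WithTop ℝ)) (l : ℕ)
    (v : Fin (l + 1) → Fin N) (j i : Fin N) : Prop :=
  v 0 = j ∧ v (Fin.last l) = i ∧ ∀ t : Fin l, A (v t.succ) (v t.castSucc) ≠ ⊤

/-- The weight of a walk: the sum of the weights of its edges. -/
def walkWeight {N : ℕ} (A : Matrix (Fin N) (Fin N) (WithTop ℝ)) (l : ℕ)
    (v : Fin (l + 1) → Fin N) : WithTop ℝ :=
  ∑ t : Fin l, A (v t.succ) (v t.castSucc)

/-- if `(lam, v)` is a min-plus eigenpair of `A` with finite eigenvector `v`,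
then every circuit of `G(A)` has average weight at least `lam`, i.e. every circuit of
length `m ≥ 1` has weight at least `m * lam`. -/
theorem circuit_avg_weight_ge_eigenvalue {N : ℕ} (A : Matrix (Fin N) (Fin N) (WithTop ℝ))
    (lam : ℝ) (v : Fin N → ℝ)
    (heig : ∀ i : Fin N,
      Finset.univ.inf (fun j => A i j + (v j : WithTop ℝ)) = ((lam + v i : ℝ) : WithTop ℝ)) :
    ∀ (m : ℕ) (i : Fin N) (c : Fin (m + 1) → Fin N), 1 ≤ m → IsWalk A m c i i →
      (((m : ℝ) * lam : ℝ) : WithTop ℝ) ≤ walkWeight A m c := by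
  intro m i c hm hw
  obtain ⟨h0, hlast, hedge⟩ := hw
  -- per-edge inequality
  have key : ∀ t : Fin m,
      ((lam + v (c t.succ) : ℝ) : WithTop ℝ)
        ≤ A (c t.succ) (c t.castSucc) + ((v (c t.castSucc) : ℝ) : WithTop ℝ) := by
    intro t
    rw [← heig (c t.succ)]
    exact Finset.inf_le (Finset.mem_univ _)
  have hsum : ∑ t : Fin m, ((lam + v (c t.succ) : ℝ) : WithTop ℝ)
      ≤ ∑ t : Fin m, (A (c t.succ) (c t.castSucc) + ((v (c t.castSucc) : ℝ) : WithTop ℝ)) :=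
    Finset.sum_le_sum fun t _ => key t
  -- telescoping sums are equal for a circuit
  have hT : ∑ t : Fin m, v (c t.succ) = ∑ t : Fin m, v (c t.castSucc) := by
    have h1 := Fin.sum_univ_castSucc (fun t => v (c t))
    have h2 := Fin.sum_univ_succ (fun t => v (c t))
    simp only [h0, hlast] at h1 h2
    have := h1.symm.trans h2
    linarith
  set S : ℝ := ∑ t : Fin m, v (c t.castSucc) with hS
  have hL : ∑ t : Fin m, ((lam + v (c t.succ) : ℝ) : WithTop ℝ)
      = (((m : ℝ) * lam + S : ℝ) : WithTop ℝ) := by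
    rw [← WithTop.coe_sum]
    congr 1
    rw [Finset.sum_add_distrib, hT, Finset.sum_const]
    simp [mul_comm]
  have hR : ∑ t : Fin m, (A (c t.succ) (c t.castSucc) + ((v (c t.castSucc) : ℝ) : WithTop ℝ))
      = walkWeight A m c + ((S : ℝ) : WithTop ℝ) := by
    rw [Finset.sum_add_distrib, ← WithTop.coe_sum]
    rfl
  rw [hL, hR, WithTop.coe_add] at hsum
  exact (WithTop.add_le_add_iff_right WithTop.coe_ne_top).mp hsum
end

section
/- Let A be an irreducible N×N matrix over ℝ ∪ {+∞} whose graph G(A) contains at least one circuit. If (λ, v) is an eigenpair of A in min-plus algebra (λ ∈ ℝ, v ∈ ℝ^N finite, min_j (A_{ij} + v_j) = λ + v_i for all i), then λ equals the minimum average circuit weight of G(A): every circuit of G(A) has average weight ≥ λ, and some circuit of G(A) has average weight exactly λ. In particular the eigenvalue of an irreducible min-plus matrix is unique. -/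
open scoped BigOperators

/-- Telescoping sum helper. -/
lemma mp_tele {m : ℕ} (g : Fin (m + 1) → ℝ) :
    ∑ t : Fin m, (g t.succ - g t.castSucc) = g (Fin.last m) - g 0 := by
  induction m with
  | zero => simp
  | succ n ih =>
    rw [Fin.sum_univ_castSucc]
    have h := ih (fun t => g t.castSucc)
    simp only [Fin.succ_castSucc] at h ⊢
    rw [h, Fin.succ_last]
    simp only [Fin.castSucc_zero]
    ring

lemma mp_tele' {m : ℕ} (lam : ℝ) (g : Fin (m + 1) → ℝ) (h : g (Fin.last m) = g 0) :
    ∑ t : Fin m, (lam + g t.succ - g t.castSucc) = m * lam := by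
  have : ∀ t : Fin m, lam + g t.succ - g t.castSucc = lam + (g t.succ - g t.castSucc) := by
    intro t; ring
  rw [Finset.sum_congr rfl (fun t _ => this t), Finset.sum_add_distrib, mp_tele, h]
  simp [mul_comm]

/-- Lower bound: every circuit has weight at least `m * lam`. -/
lemma mp_partA {N : ℕ} (A : Matrix (Fin N) (Fin N) (WithTop ℝ)) (lam : ℝ) (v : Fin N → ℝ)
    (hle : ∀ i j : Fin N, ((lam + v i : ℝ) : WithTop ℝ) ≤ A i j + (v j : WithTop ℝ))
    (m : ℕ) (i : Fin N) (c : Fin (m + 1) → Fin N) (hw : IsWalk A m c i i) :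
    (((m : ℝ) * lam : ℝ) : WithTop ℝ) ≤ walkWeight A m c := by
  obtain ⟨h0, hl, he⟩ := hw
  set e : Fin m → ℝ := fun t => (A (c t.succ) (c t.castSucc)).untop (he t) with hedef
  have hec : ∀ t, A (c t.succ) (c t.castSucc) = (e t : WithTop ℝ) :=
    fun t => (WithTop.coe_untop _ (he t)).symm
  have hW : walkWeight A m c = ((∑ t, e t : ℝ) : WithTop ℝ) := by
    rw [walkWeight, WithTop.coe_sum]
    exact Finset.sum_congr rfl fun t _ => hec t
  have hper : ∀ t : Fin m, lam + v (c t.succ) - v (c t.castSucc) ≤ e t := by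
    intro t
    have h := hle (c t.succ) (c t.castSucc)
    rw [hec t, ← WithTop.coe_add, WithTop.coe_le_coe] at h
    linarith
  rw [hW, WithTop.coe_le_coe]
  calc (m : ℝ) * lam = ∑ t : Fin m, (lam + v (c t.succ) - v (c t.castSucc)) := by
        rw [mp_tele' lam (fun t => v (c t)) (by show v (c (Fin.last m)) = v (c 0); rw [hl, h0])]
    _ ≤ ∑ t, e t := Finset.sum_le_sum fun t _ => hper t

/-- Existence: some circuit has weight exactly `m * lam`. -/
lemma mp_partB {N : ℕ} (A : Matrix (Fin N) (Fin N) (WithTop ℝ)) (lam : ℝ) (v : Fin N → ℝ)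
    (heig : ∀ i : Fin N,
      Finset.univ.inf (fun j => A i j + (v j : WithTop ℝ)) = ((lam + v i : ℝ) : WithTop ℝ))
    (i0 : Fin N) :
    ∃ (m : ℕ) (i : Fin N) (c : Fin (m + 1) → Fin N), 1 ≤ m ∧ IsWalk A m c i i ∧
      walkWeight A m c = (((m : ℝ) * lam : ℝ) : WithTop ℝ) := by
  have hne : (Finset.univ : Finset (Fin N)).Nonempty := ⟨i0, Finset.mem_univ i0⟩
  have hσ : ∀ i : Fin N, ∃ j, A i j + (v j : WithTop ℝ) = ((lam + v i : ℝ) : WithTop ℝ) := by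
    intro i
    obtain ⟨j, _, hj⟩ := Finset.exists_mem_eq_inf Finset.univ hne (fun j => A i j + (v j : WithTop ℝ))
    exact ⟨j, by rw [← hj, heig i]⟩
  choose σ hσ' using hσ
  have hA : ∀ i : Fin N, A i (σ i) = ((lam + v i - v (σ i) : ℝ) : WithTop ℝ) := by
    intro i
    have h := hσ' i
    have hnt : A i (σ i) ≠ ⊤ := by
      intro ht
      rw [ht, top_add] at h
      exact (WithTop.top_ne_coe) h
    obtain ⟨a, ha⟩ := WithTop.ne_top_iff_exists.mp hnt
    rw [← ha, ← WithTop.coe_add, WithTop.coe_eq_coe] at h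
    rw [← ha, WithTop.coe_eq_coe]
    linarith
  -- pigeonhole
  have hnotinj : ¬ Function.Injective (fun n : Fin (N + 1) => σ^[(n : ℕ)] i0) := by
    intro hinj
    have := Fintype.card_le_of_injective _ hinj
    simp at this
  obtain ⟨a, b, hab, hne'⟩ := Function.not_injective_iff.mp hnotinj
  -- wlog get p < q ≤ N with σ^[p] i0 = σ^[q] i0
  obtain ⟨p, q, hpq, hiter⟩ : ∃ p q : ℕ, p < q ∧ σ^[p] i0 = σ^[q] i0 := by
    rcases lt_or_gt_of_ne (fun h => hne' (by exact_mod_cast h : a = b)) with h | h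
    · exact ⟨a, b, h, hab⟩
    · exact ⟨b, a, h, hab.symm⟩
  set m := q - p with hm
  have hm1 : 1 ≤ m := by omega
  set c : Fin (m + 1) → Fin N := fun t => σ^[q - (t : ℕ)] i0 with hc
  have hstep : ∀ t : Fin m, c t.castSucc = σ (c t.succ) := by
    intro t
    have ht : (t : ℕ) < m := t.isLt
    have h1 : q - (t : ℕ) = (q - ((t : ℕ) + 1)) + 1 := by omega
    simp only [hc, Fin.coe_castSucc, Fin.val_succ]
    rw [h1, Function.iterate_succ_apply']
  have hedge : ∀ t : Fin m,
      A (c t.succ) (c t.castSucc) = ((lam + v (c t.succ) - v (c t.castSucc) : ℝ) : WithTop ℝ) := by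
    intro t
    rw [hstep t, hA]
  have hc0 : c 0 = σ^[q] i0 := by simp [hc]
  have hcl : c (Fin.last m) = σ^[q] i0 := by
    simp only [hc, Fin.val_last]
    have : q - m = p := by omega
    rw [this, hiter]
  refine ⟨m, σ^[q] i0, c, hm1, ⟨hc0, hcl, fun t => by rw [hedge t]; exact WithTop.coe_ne_top⟩, ?_⟩
  rw [walkWeight, Finset.sum_congr rfl (fun t _ => hedge t), ← WithTop.coe_sum,
    mp_tele' lam (fun t => v (c t)) (by show v (c (Fin.last m)) = v (c 0); rw [hcl, hc0])]

/-- for an irreducible matrix `A` whose graph contains at least one circuit,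
any min-plus eigenvalue `lam` (with finite eigenvector) equals the minimum average circuit
weight of `G(A)`: every circuit has average weight `≥ lam`, some circuit has average weight
exactly `lam`; in particular the eigenvalue is unique. -/
theorem eigenvalue_eq_min_avg_circuit_weight {N : ℕ} (A : Matrix (Fin N) (Fin N) (WithTop ℝ))
    (hirr : ∀ i j : Fin N, ∃ (l : ℕ) (p : Fin (l + 1) → Fin N), IsWalk A l p i j)
    (hcirc : ∃ (m : ℕ) (i : Fin N) (c : Fin (m + 1) → Fin N), 1 ≤ m ∧ IsWalk A m c i i)
    (lam : ℝ) (v : Fin N → ℝ)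
    (heig : ∀ i : Fin N,
      Finset.univ.inf (fun j => A i j + (v j : WithTop ℝ)) = ((lam + v i : ℝ) : WithTop ℝ)) :
    (∀ (m : ℕ) (i : Fin N) (c : Fin (m + 1) → Fin N), 1 ≤ m → IsWalk A m c i i →
        (((m : ℝ) * lam : ℝ) : WithTop ℝ) ≤ walkWeight A m c) ∧
    (∃ (m : ℕ) (i : Fin N) (c : Fin (m + 1) → Fin N), 1 ≤ m ∧ IsWalk A m c i i ∧
        walkWeight A m c = (((m : ℝ) * lam : ℝ) : WithTop ℝ)) ∧
    (∀ (lam' : ℝ) (w : Fin N → ℝ),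
      (∀ i : Fin N,
        Finset.univ.inf (fun j => A i j + (w j : WithTop ℝ)) =
          ((lam' + w i : ℝ) : WithTop ℝ)) →
      lam' = lam) := by
  obtain ⟨_, i0, _, _, _⟩ := hcirc
  have hlev : ∀ i j : Fin N, ((lam + v i : ℝ) : WithTop ℝ) ≤ A i j + (v j : WithTop ℝ) := by
    intro i j
    rw [← heig i]
    exact Finset.inf_le (Finset.mem_univ j)
  refine ⟨fun m i c _ hw => mp_partA A lam v hlev m i c hw, mp_partB A lam v heig i0, ?_⟩
  intro lam' w heig'
  have hlew : ∀ i j : Fin N, ((lam' + w i : ℝ) : WithTop ℝ) ≤ A i j + (w j : WithTop ℝ) := by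
    intro i j
    rw [← heig' i]
    exact Finset.inf_le (Finset.mem_univ j)
  obtain ⟨m, i, c, hm, hw, hweq⟩ := mp_partB A lam' w heig' i0
  obtain ⟨m', i', c', hm', hw', hweq'⟩ := mp_partB A lam v heig i0
  have h1 : (((m : ℝ) * lam : ℝ) : WithTop ℝ) ≤ (((m : ℝ) * lam' : ℝ) : WithTop ℝ) := by
    rw [← hweq]; exact mp_partA A lam v hlev m i c hw
  have h2 : (((m' : ℝ) * lam' : ℝ) : WithTop ℝ) ≤ (((m' : ℝ) * lam : ℝ) : WithTop ℝ) := by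
    rw [← hweq']; exact mp_partA A lam' w hlew m' i' c' hw'
  rw [WithTop.coe_le_coe] at h1 h2
  have hmr : (1 : ℝ) ≤ (m : ℝ) := by exact_mod_cast hm
  have hmr' : (1 : ℝ) ≤ (m' : ℝ) := by exact_mod_cast hm'
  nlinarith
end

section
/- Let A be an irreducible N×N matrix over ℝ ∪ {+∞} whose graph G(A) contains at least one circuit, and let λ be the minimum average circuit weight of G(A). Then there exists a finite vector v ∈ ℝ^N with min_j (A_{ij} + v_j) = λ + v_i for all i; that is, λ is a min-plus eigenvalue of A with a finite eigenvector. -/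
open scoped BigOperators

/-!
Subtract `lam` from every edge weight. By minimality of `lam` the shifted graph has no circuit of
negative weight, and the critical circuit becomes a circuit of weight zero through some node `η`.
Let `v i` be the infimum of the shifted weights of walks from `η` to `i`; it is finite because a
walk back from `i` to `η` closes each such walk into a circuit. Extending walks by one edge gives
`v i ≤ A i j - lam + v j`. Conversely, a near-optimal walk to `i ≠ η` ends with an edge `j → i`
attaining this bound up to `ε`, and for `i = η` the last edge of the zero circuit attains it,
since `v η = 0`.
-/

theorem WithTop.le_coe_of_forall_pos_le_coe_add {s : WithTop ℝ} {c : ℝ}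
    (h : ∀ ε > 0, s ≤ ((c + ε : ℝ) : WithTop ℝ)) : s ≤ c := by
  induction s with
  | top => simpa using h 1 one_pos
  | coe r =>
    exact WithTop.coe_le_coe.2 <|
      le_of_forall_pos_le_add fun ε hε => WithTop.coe_le_coe.1 (h ε hε)

section ShiftedWalks

variable {N : ℕ} {A : Matrix (Fin N) (Fin N) (WithTop ℝ)}

theorem isWalk_snoc_iff {l : ℕ} {p : Fin (l + 1) → Fin N} {k j i : Fin N} :
    IsWalk A (l + 1) (Fin.snoc p k) j i ↔
      IsWalk A l p j (p (Fin.last l)) ∧ A k (p (Fin.last l)) ≠ ⊤ ∧ k = i := by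
  simp only [IsWalk, Fin.forall_fin_succ', Fin.snoc_last, Fin.succ_castSucc, Fin.snoc_castSucc,
    Fin.succ_last, true_and, ← Fin.castSucc_zero]
  tauto

theorem walkWeight_snoc (l : ℕ) (p : Fin (l + 1) → Fin N) (k : Fin N) :
    walkWeight A (l + 1) (Fin.snoc p k) = walkWeight A l p + A k (p (Fin.last l)) := by
  simp only [walkWeight, Fin.sum_univ_castSucc, Fin.succ_castSucc, Fin.snoc_castSucc,
    Fin.succ_last, Fin.snoc_last]

/-- `IsShiftedWalkWeight A lam j i x`: some walk from `j` to `i` in `G(A)` has weight `x` once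
`lam` is subtracted from the weight of each of its edges. -/
inductive IsShiftedWalkWeight (A : Matrix (Fin N) (Fin N) (WithTop ℝ)) (lam : ℝ) (j : Fin N) :
    Fin N → ℝ → Prop
  | nil : IsShiftedWalkWeight A lam j j 0
  | snoc {k i : Fin N} {x a : ℝ} :
      IsShiftedWalkWeight A lam j k x → A i k = a → IsShiftedWalkWeight A lam j i (x + a - lam)

variable {lam : ℝ}

namespace IsShiftedWalkWeight

theorem trans {i j k : Fin N} {x y : ℝ} (h₁ : IsShiftedWalkWeight A lam j k x)
    (h₂ : IsShiftedWalkWeight A lam k i y) : IsShiftedWalkWeight A lam j i (x + y) := by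
  induction h₂ with
  | nil => simpa using h₁
  | snoc _ ha ih => simpa only [add_sub_assoc, add_assoc] using ih.snoc ha

theorem exists_isWalk {i j : Fin N} {x : ℝ} (h : IsShiftedWalkWeight A lam j i x) :
    ∃ (l : ℕ) (p : Fin (l + 1) → Fin N),
      IsWalk A l p j i ∧ walkWeight A l p = ((x + l * lam : ℝ) : WithTop ℝ) := by
  induction h with
  | nil => exact ⟨0, fun _ => j, ⟨rfl, rfl, nofun⟩, by simp [walkWeight]⟩
  | @snoc k i x a _ ha ih =>
    obtain ⟨l, p, hp, hw⟩ := ih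
    refine ⟨l + 1, Fin.snoc p i, ?_, ?_⟩
    · rw [isWalk_snoc_iff, hp.2.1]
      exact ⟨hp, by simp [ha], rfl⟩
    · rw [walkWeight_snoc, hw, hp.2.1, ha, ← WithTop.coe_add]
      congr 1
      push_cast
      ring

theorem nonneg
    (hlb : ∀ (m : ℕ) (i : Fin N) (c : Fin (m + 1) → Fin N), 1 ≤ m → IsWalk A m c i i →
      (((m : ℝ) * lam : ℝ) : WithTop ℝ) ≤ walkWeight A m c)
    {i : Fin N} {x : ℝ} (h : IsShiftedWalkWeight A lam i i x) : 0 ≤ x := by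
  obtain ⟨l, p, hp, hw⟩ := h.exists_isWalk
  rcases Nat.eq_zero_or_pos l with rfl | hl
  · simpa [walkWeight] using hw.le
  · have := hlb l i p hl hp
    rw [hw, WithTop.coe_le_coe] at this
    linarith

end IsShiftedWalkWeight

theorem IsWalk.exists_isShiftedWalkWeight {l : ℕ} {p : Fin (l + 1) → Fin N} {j i : Fin N}
    (hp : IsWalk A l p j i) (lam : ℝ) :
    ∃ x, IsShiftedWalkWeight A lam j i x ∧
      walkWeight A l p = ((x + l * lam : ℝ) : WithTop ℝ) := by
  induction l generalizing i with
  | zero =>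
    exact ⟨0, by simpa [← hp.1, ← hp.2.1] using IsShiftedWalkWeight.nil, by simp [walkWeight]⟩
  | succ l ih =>
    rw [← Fin.snoc_init_self p, isWalk_snoc_iff] at hp
    obtain ⟨hinit, hedge, rfl⟩ := hp
    obtain ⟨x, hx, hw⟩ := ih hinit
    obtain ⟨a, ha⟩ := WithTop.ne_top_iff_exists.mp hedge
    refine ⟨x + a - lam, hx.snoc ha.symm, ?_⟩
    rw [← Fin.snoc_init_self p, walkWeight_snoc, hw, ← ha, ← WithTop.coe_add]
    congr 1
    push_cast
    ring

theorem IsWalk.exists_edge_isShiftedWalkWeight_of_walkWeight_eq {m : ℕ}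
    {c : Fin (m + 1) → Fin N} {i : Fin N} (hm : 1 ≤ m) (hc : IsWalk A m c i i)
    (hw : walkWeight A m c = (((m : ℝ) * lam : ℝ) : WithTop ℝ)) :
    ∃ (k : Fin N) (a : ℝ), A i k = a ∧ IsShiftedWalkWeight A lam i k (lam - a) := by
  obtain ⟨m, rfl⟩ : ∃ m', m = m' + 1 := ⟨m - 1, by omega⟩
  rw [← Fin.snoc_init_self c] at hc hw
  obtain ⟨hinit, hedge, hlast⟩ := isWalk_snoc_iff.mp hc
  obtain ⟨x, hx, hwx⟩ := hinit.exists_isShiftedWalkWeight lam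
  obtain ⟨a, ha⟩ := WithTop.ne_top_iff_exists.mp hedge
  refine ⟨_, a, hlast ▸ ha.symm, ?_⟩
  rw [walkWeight_snoc, hwx, ← ha, ← WithTop.coe_add, WithTop.coe_inj] at hw
  convert hx using 1
  push_cast at hw
  linarith

noncomputable def shiftedDist (A : Matrix (Fin N) (Fin N) (WithTop ℝ)) (lam : ℝ)
    (η i : Fin N) : ℝ :=
  sInf {x | IsShiftedWalkWeight A lam η i x}

variable {η : Fin N}

theorem bddBelow_isShiftedWalkWeight (hnn : ∀ x, IsShiftedWalkWeight A lam η η x → 0 ≤ x)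
    {i : Fin N} {y : ℝ} (hback : IsShiftedWalkWeight A lam i η y) :
    BddBelow {x | IsShiftedWalkWeight A lam η i x} :=
  ⟨-y, fun x hx => by linarith [hnn _ (hx.trans hback)]⟩

theorem shiftedDist_le {i : Fin N} {x : ℝ}
    (hbdd : BddBelow {x | IsShiftedWalkWeight A lam η i x})
    (h : IsShiftedWalkWeight A lam η i x) : shiftedDist A lam η i ≤ x :=
  csInf_le hbdd h

theorem shiftedDist_self (hnn : ∀ x, IsShiftedWalkWeight A lam η η x → 0 ≤ x) :
    shiftedDist A lam η η = 0 :=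
  le_antisymm (shiftedDist_le ⟨0, fun _ => hnn _⟩ .nil) (le_csInf ⟨0, .nil⟩ fun _ => hnn _)

theorem shiftedDist_le_add_of_edge {i j : Fin N} {a : ℝ}
    (hbdd : BddBelow {x | IsShiftedWalkWeight A lam η i x})
    (hne : ∃ x, IsShiftedWalkWeight A lam η j x) (ha : A i j = a) :
    shiftedDist A lam η i ≤ shiftedDist A lam η j + a - lam := by
  have : shiftedDist A lam η i - a + lam ≤ shiftedDist A lam η j :=
    le_csInf hne fun y hy => by linarith [shiftedDist_le hbdd (hy.snoc ha)]
  linarith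

theorem exists_edge_add_shiftedDist_le (hnn : ∀ x, IsShiftedWalkWeight A lam η η x → 0 ≤ x)
    (hbdd : ∀ i, BddBelow {x | IsShiftedWalkWeight A lam η i x}) {k : Fin N} {a : ℝ}
    (hka : A η k = a) (hcrit : IsShiftedWalkWeight A lam η k (lam - a)) {i : Fin N}
    (hne : ∃ x, IsShiftedWalkWeight A lam η i x) {ε : ℝ} (hε : 0 < ε) :
    ∃ (j : Fin N) (b : ℝ),
      A i j = b ∧ b + shiftedDist A lam η j ≤ lam + shiftedDist A lam η i + ε := by
  by_cases hi : i = η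
  · subst hi
    refine ⟨k, a, hka, ?_⟩
    linarith [shiftedDist_le (hbdd k) hcrit, shiftedDist_self hnn]
  · obtain ⟨x, hx, hxlt⟩ :=
      exists_lt_of_csInf_lt hne (lt_add_of_pos_right (shiftedDist A lam η i) hε)
    cases hx with
    | nil => exact absurd rfl hi
    | @snoc j _ y b hy hb => exact ⟨j, b, hb, by linarith [shiftedDist_le (hbdd j) hy]⟩

theorem inf_add_shiftedDist_eq (hnn : ∀ x, IsShiftedWalkWeight A lam η η x → 0 ≤ x)
    (hconn : ∀ i j, ∃ x, IsShiftedWalkWeight A lam i j x) {k : Fin N} {a : ℝ}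
    (hka : A η k = a) (hcrit : IsShiftedWalkWeight A lam η k (lam - a)) (i : Fin N) :
    Finset.univ.inf (fun j => A i j + (shiftedDist A lam η j : WithTop ℝ)) =
      ((lam + shiftedDist A lam η i : ℝ) : WithTop ℝ) := by
  have hbdd i : BddBelow {x | IsShiftedWalkWeight A lam η i x} :=
    (hconn i η).elim fun _ => bddBelow_isShiftedWalkWeight hnn
  apply le_antisymm
  · refine WithTop.le_coe_of_forall_pos_le_coe_add fun ε hε => ?_
    obtain ⟨j, b, hb, hj⟩ := exists_edge_add_shiftedDist_le hnn hbdd hka hcrit (hconn η i) hε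
    refine (Finset.inf_le (Finset.mem_univ j)).trans ?_
    rw [hb, ← WithTop.coe_add, WithTop.coe_le_coe]
    exact hj
  · refine Finset.le_inf fun j _ => ?_
    cases hA : A i j with
    | top => simp
    | coe b =>
      rw [← WithTop.coe_add, WithTop.coe_le_coe]
      linarith [shiftedDist_le_add_of_edge (hbdd i) (hconn η j) hA]

end ShiftedWalks

/-- for an irreducible matrix `A` whose graph contains at least one circuit,
the minimum average circuit weight `lam` of `G(A)` is a min-plus eigenvalue of `A` with a
finite eigenvector. -/
theorem exists_finite_eigenvector_of_min_avg_circuit_weight {N : ℕ}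
    (A : Matrix (Fin N) (Fin N) (WithTop ℝ))
    (hirr : ∀ i j : Fin N, ∃ (l : ℕ) (p : Fin (l + 1) → Fin N), IsWalk A l p i j)
    (lam : ℝ)
    (hlb : ∀ (m : ℕ) (i : Fin N) (c : Fin (m + 1) → Fin N), 1 ≤ m → IsWalk A m c i i →
      (((m : ℝ) * lam : ℝ) : WithTop ℝ) ≤ walkWeight A m c)
    (hmin : ∃ (m : ℕ) (i : Fin N) (c : Fin (m + 1) → Fin N), 1 ≤ m ∧ IsWalk A m c i i ∧
      walkWeight A m c = (((m : ℝ) * lam : ℝ) : WithTop ℝ)) :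
    ∃ v : Fin N → ℝ, ∀ i : Fin N,
      Finset.univ.inf (fun j => A i j + (v j : WithTop ℝ)) = ((lam + v i : ℝ) : WithTop ℝ) := by
  obtain ⟨m, η, c, hm, hc, hw⟩ := hmin
  obtain ⟨k, a, hka, hcrit⟩ := hc.exists_edge_isShiftedWalkWeight_of_walkWeight_eq hm hw
  have hconn i j : ∃ x, IsShiftedWalkWeight A lam i j x :=
    let ⟨_, _, hp⟩ := hirr i j
    (hp.exists_isShiftedWalkWeight lam).imp fun _ => And.left
  exact ⟨shiftedDist A lam η,
    inf_add_shiftedDist_eq (fun _ => IsShiftedWalkWeight.nonneg hlb) hconn hka hcrit⟩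
end

section
/- Let A be an irreducible N×N matrix over ℝ ∪ {+∞} whose graph contains at least one circuit, let λ be the minimum average circuit weight of G(A), let Â be the normalised matrix with Â_{ij} = A_{ij} − λ whenever A_{ij} ≠ +∞ (and Â_{ij} = +∞ otherwise), and let Â* = ⊖_{k=0}^{N−1} Â^{⊙k} be its Kleene star. If node i lies on a circuit of G(A) of average weight λ (i.e., i belongs to the critical graph of A), then the i-th column v = (Â*)_{·i} is a finite real vector satisfying min_j (A_{kj} + v_j) = λ + v_k for all k; that is, it is a min-plus eigenvector of A with eigenvalue λ. -/
open scoped BigOperators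

/-- The normalised matrix `Â` with `Â i j = A i j - lam` (and `+∞` stays `+∞`). -/
def normalised {N : ℕ} (A : Matrix (Fin N) (Fin N) (WithTop ℝ)) (lam : ℝ) :
    Matrix (Fin N) (Fin N) (WithTop ℝ) :=
  fun i j => A i j + ((-lam : ℝ) : WithTop ℝ)

/-- The Kleene star `Â* = ⊖_{k=0}^{N-1} Â^{⊙k}` (entrywise minimum). -/
def kleeneStar {N : ℕ} (B : Matrix (Fin N) (Fin N) (WithTop ℝ)) :
    Matrix (Fin N) (Fin N) (WithTop ℝ) :=
  fun i j => (Finset.range N).inf fun k => mpPow B k i j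

/-!
Write `B` for the normalised matrix `Â`. Since `λ` is the minimum circuit mean, every circuit of
`B` has nonnegative weight, so a walk of length `≥ N` repeats a node and cutting out the circuit
between the repetitions does not increase its weight: the Kleene star `B*` lies below every
min-plus power `B^l`. Hence `B* ≤ B ⊙ B*`, and `B ⊙ B* ≤ B^(l+1)` for all `l`. The remaining
term `B^0 = mpId` of the star only matters on the diagonal, and at a critical node `i₀` it is
beaten by `B^m i₀ i₀ ≤ 0`, `m` being the length of a critical circuit rotated to start at `i₀`.
So the column `B*_{·i₀}` is fixed by `B ⊙ ·`, which after undoing the shift by `λ` is the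
eigenvector equation; irreducibility makes the column finite.
-/

open Finset

theorem add_finset_inf {ι : Type*} (b : WithTop ℝ) (s : Finset ι) (f : ι → WithTop ℝ) :
    b + s.inf f = s.inf fun x => b + f x :=
  apply_inf_eq_inf_comp_of_linearOrder (b + ·) (fun _ _ h => add_le_add_right h b) (add_top b)

@[simp]
theorem Fin.clamp_val {l : ℕ} (t : Fin (l + 1)) : Fin.clamp t l = t :=
  Fin.ext (Nat.min_eq_left (Nat.lt_succ_iff.1 t.isLt))

@[simp]
theorem Fin.clamp_zero (l : ℕ) : Fin.clamp 0 l = 0 :=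
  Fin.clamp_val 0

section MinPlus

variable {N : ℕ} (B : Matrix (Fin N) (Fin N) (WithTop ℝ))

-- Walks are indexed by `ℕ` here, so that they can be split and extended without `Fin` casts.
def seqWeight (l : ℕ) (c : ℕ → Fin N) : WithTop ℝ :=
  ∑ t ∈ range l, B (c (t + 1)) (c t)

theorem seqWeight_succ (l : ℕ) (c : ℕ → Fin N) :
    seqWeight B (l + 1) c = seqWeight B l c + B (c (l + 1)) (c l) :=
  sum_range_succ _ _

theorem seqWeight_add (a b : ℕ) (c : ℕ → Fin N) :
    seqWeight B (a + b) c = seqWeight B a c + seqWeight B b (fun s => c (a + s)) := by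
  simp only [seqWeight, sum_range_add, add_assoc]

theorem seqWeight_congr {l : ℕ} {c c' : ℕ → Fin N} (h : ∀ t ≤ l, c t = c' t) :
    seqWeight B l c = seqWeight B l c' :=
  sum_congr rfl fun t ht => by
    rw [mem_range] at ht
    rw [h t ht.le, h (t + 1) ht]

theorem walkWeight_eq_seqWeight (l : ℕ) (c : ℕ → Fin N) :
    walkWeight B l (fun t => c t) = seqWeight B l c := by
  simp [walkWeight, seqWeight, Fin.sum_univ_eq_sum_range (fun t => B (c (t + 1)) (c t))]

theorem walkWeight_eq_seqWeight_clamp (l : ℕ) (p : Fin (l + 1) → Fin N) :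
    walkWeight B l p = seqWeight B l (fun t => p (Fin.clamp t l)) := by
  simp only [← walkWeight_eq_seqWeight, Fin.clamp_val]

theorem isWalk_of_seqWeight_ne_top {l : ℕ} {c : ℕ → Fin N} (h : seqWeight B l c ≠ ⊤) :
    IsWalk B l (fun t => c t) (c 0) (c l) := by
  refine ⟨rfl, rfl, fun t => ?_⟩
  rw [← walkWeight_eq_seqWeight, walkWeight, WithTop.sum_ne_top] at h
  exact h t (mem_univ t)

theorem mpPow_le_seqWeight (l : ℕ) (c : ℕ → Fin N) : mpPow B l (c l) (c 0) ≤ seqWeight B l c := by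
  induction l with
  | zero => simp [mpPow, mpId, seqWeight]
  | succ l ih =>
    calc mpPow B (l + 1) (c (l + 1)) (c 0)
        ≤ B (c (l + 1)) (c l) + mpPow B l (c l) (c 0) :=
          inf_le (f := fun k => B (c (l + 1)) k + mpPow B l k (c 0)) (mem_univ _)
      _ ≤ B (c (l + 1)) (c l) + seqWeight B l c := by gcongr
      _ = seqWeight B (l + 1) c := by rw [seqWeight_succ, add_comm]

theorem mpPow_le_walkWeight (l : ℕ) (p : Fin (l + 1) → Fin N) :
    mpPow B l (p (Fin.last l)) (p 0) ≤ walkWeight B l p := by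
  simpa [walkWeight_eq_seqWeight_clamp, Fin.clamp_eq_last] using
    mpPow_le_seqWeight B l (fun t => p (Fin.clamp t l))

theorem mpPow_ne_top_of_isWalk {l : ℕ} {p : Fin (l + 1) → Fin N} {i j : Fin N}
    (hp : IsWalk B l p j i) : mpPow B l i j ≠ ⊤ := by
  obtain ⟨rfl, rfl, hedges⟩ := hp
  refine ne_top_of_le_ne_top ?_ (mpPow_le_walkWeight B l p)
  exact WithTop.sum_ne_top.2 fun t _ => hedges t

theorem exists_seqWeight_eq_mpPow {l : ℕ} {i j : Fin N} (h : mpPow B l i j ≠ ⊤) :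
    ∃ c : ℕ → Fin N, c 0 = j ∧ c l = i ∧ seqWeight B l c = mpPow B l i j := by
  induction l generalizing i with
  | zero =>
    have hij : i = j := by_contra fun hij => h (by simp [mpPow, mpId, hij])
    exact ⟨fun _ => j, rfl, hij.symm, by simp [seqWeight, mpPow, mpId, hij]⟩
  | succ l ih =>
    obtain ⟨k, -, hk⟩ := exists_mem_eq_inf univ ⟨i, mem_univ i⟩
      (fun k => B i k + mpPow B l k j)
    have hk : mpPow B (l + 1) i j = B i k + mpPow B l k j := hk
    rw [hk] at h ⊢
    obtain ⟨c, hc0, hcl, hc⟩ := ih (WithTop.add_ne_top.1 h).2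
    refine ⟨Function.update c (l + 1) i, by simp [hc0], by simp, ?_⟩
    have hprefix : seqWeight B l (Function.update c (l + 1) i) = seqWeight B l c :=
      seqWeight_congr B fun t ht => Function.update_of_ne (by omega) _ _
    rw [seqWeight_succ, hprefix, hc, Function.update_self, Function.update_of_ne (by omega), hcl,
      add_comm]

theorem mpPow_add_le (p q : ℕ) (i j k : Fin N) :
    mpPow B (p + q) i j ≤ mpPow B p i k + mpPow B q k j := by
  induction p generalizing i with
  | zero => by_cases hik : i = k <;> simp [mpPow, mpId, hik]
  | succ p ih =>
    rw [show p + 1 + q = p + q + 1 by omega]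
    show mpMul B (mpPow B (p + q)) i j ≤ mpMul B (mpPow B p) i k + mpPow B q k j
    rw [mpMul, mpMul, add_comm _ (mpPow B q k j), add_finset_inf]
    refine Finset.le_inf fun k' _ => ?_
    calc univ.inf (fun k'' => B i k'' + mpPow B (p + q) k'' j)
        ≤ B i k' + mpPow B (p + q) k' j := inf_le (mem_univ k')
      _ ≤ B i k' + (mpPow B p k' k + mpPow B q k j) := by gcongr; exact ih k'
      _ = mpPow B q k j + (B i k' + mpPow B p k' k) := by ac_rfl

theorem mpPow_le_seqWeight_of_cycle {m t : ℕ} {c : ℕ → Fin N} (hc : c m = c 0) (ht : t ≤ m) :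
    mpPow B m (c t) (c t) ≤ seqWeight B m c := by
  obtain ⟨s, rfl⟩ := Nat.exists_eq_add_of_le ht
  have hfirst := mpPow_le_seqWeight B t c
  have hlast : mpPow B s (c 0) (c t) ≤ seqWeight B s (fun r => c (t + r)) := by
    simpa [hc] using mpPow_le_seqWeight B s (fun r => c (t + r))
  calc mpPow B (t + s) (c t) (c t) ≤ mpPow B t (c t) (c 0) + mpPow B s (c 0) (c t) :=
        mpPow_add_le B t s _ _ _
    _ ≤ seqWeight B (t + s) c := by rw [seqWeight_add]; gcongr

theorem mpPow_le_walkWeight_of_cycle {m : ℕ} {c : Fin (m + 1) → Fin N} (hc : c (Fin.last m) = c 0)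
    (t : Fin (m + 1)) : mpPow B m (c t) (c t) ≤ walkWeight B m c := by
  simpa [walkWeight_eq_seqWeight_clamp] using
    mpPow_le_seqWeight_of_cycle B (c := fun r => c (Fin.clamp r m))
      (by simpa [Fin.clamp_eq_last] using hc) (Nat.lt_succ_iff.1 t.isLt)

-- The left side is the length-`(e + a)` walk left after cutting out the circuit
-- `c a → ⋯ → c (a + d)`.
theorem mpPow_le_seqWeight_of_cycle_within {a d e : ℕ} {c : ℕ → Fin N} (hc : c (a + d) = c a)
    (hcycle : 0 ≤ mpPow B d (c a) (c a)) :
    mpPow B (e + a) (c (a + (d + e))) (c 0) ≤ seqWeight B (a + (d + e)) c := by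
  have hfirst := mpPow_le_seqWeight B a c
  have hmid : 0 ≤ seqWeight B d (fun s => c (a + s)) :=
    hcycle.trans (by simpa [hc] using mpPow_le_seqWeight B d (fun s => c (a + s)))
  have hlast : mpPow B e (c (a + (d + e))) (c a) ≤ seqWeight B e (fun s => c (a + (d + s))) := by
    simpa [hc] using mpPow_le_seqWeight B e (fun s => c (a + (d + s)))
  calc mpPow B (e + a) (c (a + (d + e))) (c 0)
      ≤ mpPow B e (c (a + (d + e))) (c a) + mpPow B a (c a) (c 0) := mpPow_add_le B e a _ _ _
    _ ≤ seqWeight B a c + (0 + seqWeight B e (fun s => c (a + (d + s)))) := by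
      rw [zero_add, add_comm]; gcongr
    _ ≤ seqWeight B (a + (d + e)) c := by
      rw [seqWeight_add, seqWeight_add]; gcongr

theorem exists_lt_le_map_eq_of_card_le (c : ℕ → Fin N) {l : ℕ} (hl : N ≤ l) :
    ∃ a b, a < b ∧ b ≤ l ∧ c a = c b := by
  obtain ⟨x, hx, y, hy, hxy, hcxy⟩ := exists_ne_map_eq_of_card_lt_of_maps_to
    (s := range (l + 1)) (t := (univ : Finset (Fin N))) (by simp; omega)
    (fun _ _ => mem_coe.2 (mem_univ _))
  rw [mem_range] at hx hy
  rcases hxy.lt_or_gt with h | h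
  · exact ⟨x, y, h, by omega, hcxy⟩
  · exact ⟨y, x, h, by omega, hcxy.symm⟩

theorem kleeneStar_le_mpPow (hB : ∀ m i, 0 ≤ mpPow B (m + 1) i i) (l : ℕ) (i j : Fin N) :
    kleeneStar B i j ≤ mpPow B l i j := by
  induction l using Nat.strong_induction_on generalizing i j with
  | _ l ih =>
  rcases lt_or_ge l N with hl | hl
  · exact inf_le (mem_range.2 hl)
  by_cases htop : mpPow B l i j = ⊤
  · simp [htop]
  obtain ⟨c, rfl, rfl, hc⟩ := exists_seqWeight_eq_mpPow B htop
  obtain ⟨a, b, hab, hbl, hcab⟩ := exists_lt_le_map_eq_of_card_le c hl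
  obtain ⟨d, rfl⟩ : ∃ d, b = a + (d + 1) := ⟨b - a - 1, by omega⟩
  obtain ⟨e, rfl⟩ : ∃ e, l = a + ((d + 1) + e) := ⟨l - (a + (d + 1)), by omega⟩
  calc kleeneStar B _ _ ≤ mpPow B (e + a) _ _ := ih _ (by omega) _ _
    _ ≤ _ := mpPow_le_seqWeight_of_cycle_within B hcab.symm (hB d (c a))
    _ = _ := hc

theorem mpMul_kleeneStar_le_mpPow_succ (hB : ∀ m i, 0 ≤ mpPow B (m + 1) i i) (l : ℕ)
    (k i : Fin N) : mpMul B (kleeneStar B) k i ≤ mpPow B (l + 1) k i :=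
  inf_mono_fun fun j _ => add_le_add_right (kleeneStar_le_mpPow B hB l j i) _

theorem mpMul_kleeneStar_eq_of_mpPow_le_zero (hB : ∀ m i, 0 ≤ mpPow B (m + 1) i i) {m : ℕ}
    {i : Fin N} (hi : mpPow B (m + 1) i i ≤ 0) (k : Fin N) :
    mpMul B (kleeneStar B) k i = kleeneStar B k i := by
  apply le_antisymm
  · refine Finset.le_inf fun l _ => ?_
    cases l with
    | zero =>
      by_cases hk : k = i
      · subst hk
        exact (mpMul_kleeneStar_le_mpPow_succ B hB m k k).trans (hi.trans (by simp [mpPow, mpId]))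
      · simp [mpPow, mpId, hk]
    | succ l => exact mpMul_kleeneStar_le_mpPow_succ B hB l k i
  · refine Finset.le_inf fun j _ => ?_
    change _ ≤ B k j + (range N).inf fun l => mpPow B l j i
    rw [add_finset_inf]
    exact Finset.le_inf fun l _ =>
      (kleeneStar_le_mpPow B hB (l + 1) k i).trans (inf_le (mem_univ j))

theorem mul_le_mpPow_self_of_le_walkWeight (lam : ℝ)
    (hlb : ∀ (m : ℕ) (i : Fin N) (c : Fin (m + 1) → Fin N), 1 ≤ m → IsWalk B m c i i →
      (((m : ℝ) * lam : ℝ) : WithTop ℝ) ≤ walkWeight B m c)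
    {m : ℕ} (hm : 1 ≤ m) (i : Fin N) :
    (((m : ℝ) * lam : ℝ) : WithTop ℝ) ≤ mpPow B m i i := by
  by_cases htop : mpPow B m i i = ⊤
  · simp [htop]
  obtain ⟨c, hc0, hcm, hc⟩ := exists_seqWeight_eq_mpPow B htop
  have hwalk := isWalk_of_seqWeight_ne_top B (hc ▸ htop)
  rw [hc0, hcm] at hwalk
  simpa [walkWeight_eq_seqWeight, hc] using hlb m i _ hm hwalk

end MinPlus

section Normalised

variable {N : ℕ} (A : Matrix (Fin N) (Fin N) (WithTop ℝ)) (lam : ℝ)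

theorem coe_add_normalised (i j : Fin N) : (lam : WithTop ℝ) + normalised A lam i j = A i j := by
  rw [normalised, add_left_comm, ← WithTop.coe_add, add_neg_cancel, WithTop.coe_zero, add_zero]

theorem coe_mul_add_mpPow_normalised (l : ℕ) (i j : Fin N) :
    (((l : ℝ) * lam : ℝ) : WithTop ℝ) + mpPow (normalised A lam) l i j = mpPow A l i j := by
  induction l generalizing i with
  | zero => simp [mpPow]
  | succ l ih =>
    simp only [mpPow, mpMul, add_finset_inf]
    refine inf_congr rfl fun k _ => ?_
    rw [← coe_add_normalised A lam i k, ← ih k, add_add_add_comm, ← WithTop.coe_add]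
    congr 2
    push_cast
    ring

theorem zero_le_mpPow_normalised_iff (l : ℕ) (i j : Fin N) :
    0 ≤ mpPow (normalised A lam) l i j ↔ (((l : ℝ) * lam : ℝ) : WithTop ℝ) ≤ mpPow A l i j := by
  rw [← coe_mul_add_mpPow_normalised A lam]
  simpa using (WithTop.add_le_add_iff_left (y := 0) (z := mpPow (normalised A lam) l i j)
    (WithTop.coe_ne_top (a := (l : ℝ) * lam))).symm

theorem mpPow_normalised_le_zero_iff (l : ℕ) (i j : Fin N) :
    mpPow (normalised A lam) l i j ≤ 0 ↔ mpPow A l i j ≤ (((l : ℝ) * lam : ℝ) : WithTop ℝ) := by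
  rw [← coe_mul_add_mpPow_normalised A lam]
  simpa using (WithTop.add_le_add_iff_left (y := mpPow (normalised A lam) l i j) (z := 0)
    (WithTop.coe_ne_top (a := (l : ℝ) * lam))).symm

theorem mpPow_normalised_ne_top_iff (l : ℕ) (i j : Fin N) :
    mpPow (normalised A lam) l i j ≠ ⊤ ↔ mpPow A l i j ≠ ⊤ := by
  rw [← coe_mul_add_mpPow_normalised A lam, WithTop.add_ne_top]
  exact ⟨fun h => ⟨WithTop.coe_ne_top, h⟩, And.right⟩

end Normalised

theorem critical_column_of_kleene_star_is_eigenvector_general {N : ℕ}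
    (A : Matrix (Fin N) (Fin N) (WithTop ℝ))
    (hirr : ∀ i j : Fin N, ∃ (l : ℕ) (p : Fin (l + 1) → Fin N), IsWalk A l p i j)
    (lam : ℝ)
    (hlb : ∀ (m : ℕ) (i : Fin N) (c : Fin (m + 1) → Fin N), 1 ≤ m → IsWalk A m c i i →
      (((m : ℝ) * lam : ℝ) : WithTop ℝ) ≤ walkWeight A m c)
    (i₀ : Fin N)
    (hcrit : ∃ (m : ℕ) (c : Fin (m + 1) → Fin N), 1 ≤ m ∧ IsWalk A m c (c 0) (c 0) ∧
      walkWeight A m c = (((m : ℝ) * lam : ℝ) : WithTop ℝ) ∧ ∃ t : Fin (m + 1), c t = i₀) :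
    ∃ v : Fin N → ℝ,
      (∀ j : Fin N, (v j : WithTop ℝ) = kleeneStar (normalised A lam) j i₀) ∧
      (∀ k : Fin N,
        Finset.univ.inf (fun j => A k j + (v j : WithTop ℝ)) =
          ((lam + v k : ℝ) : WithTop ℝ)) := by
  set B := normalised A lam
  have hB : ∀ m i, 0 ≤ mpPow B (m + 1) i i := fun m i =>
    (zero_le_mpPow_normalised_iff A lam _ i i).2
      (mul_le_mpPow_self_of_le_walkWeight A lam hlb m.succ_pos i)
  have hfin : ∀ j, kleeneStar B j i₀ ≠ ⊤ := fun j => by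
    obtain ⟨l, p, hp⟩ := hirr i₀ j
    exact ne_top_of_le_ne_top ((mpPow_normalised_ne_top_iff A lam l j i₀).2
      (mpPow_ne_top_of_isWalk A hp)) (kleeneStar_le_mpPow B hB l j i₀)
  obtain ⟨m, c, hm, ⟨-, hclosed, -⟩, hcw, t, rfl⟩ := hcrit
  obtain ⟨m, rfl⟩ : ∃ m', m = m' + 1 := ⟨m - 1, by omega⟩
  have hcycle : mpPow B (m + 1) (c t) (c t) ≤ 0 :=
    (mpPow_normalised_le_zero_iff A lam _ _ _).2 (hcw ▸ mpPow_le_walkWeight_of_cycle A hclosed t)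
  refine ⟨fun j => (kleeneStar B j (c t)).untop (hfin j), fun j => WithTop.coe_untop _ _,
    fun k => ?_⟩
  simp only [WithTop.coe_untop, WithTop.coe_add, ← coe_add_normalised A lam k, add_assoc,
    ← add_finset_inf]
  exact congrArg _ (mpMul_kleeneStar_eq_of_mpPow_le_zero B hB hcycle k)

/-- for irreducible `A` (graph containing a circuit) with minimum average
circuit weight `lam`, if node `i₀` lies on a critical circuit (a circuit of average weight
`lam`), then the `i₀`-th column of the Kleene star of the normalised matrix `Â` is a finite
min-plus eigenvector of `A` with eigenvalue `lam`. -/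
theorem critical_column_of_kleene_star_is_eigenvector {N : ℕ}
    (A : Matrix (Fin N) (Fin N) (WithTop ℝ))
    (hirr : ∀ i j : Fin N, ∃ (l : ℕ) (p : Fin (l + 1) → Fin N), IsWalk A l p i j)
    (lam : ℝ)
    (hlb : ∀ (m : ℕ) (i : Fin N) (c : Fin (m + 1) → Fin N), 1 ≤ m → IsWalk A m c i i →
      (((m : ℝ) * lam : ℝ) : WithTop ℝ) ≤ walkWeight A m c)
    (hmin : ∃ (m : ℕ) (i : Fin N) (c : Fin (m + 1) → Fin N), 1 ≤ m ∧ IsWalk A m c i i ∧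
      walkWeight A m c = (((m : ℝ) * lam : ℝ) : WithTop ℝ))
    (i₀ : Fin N)
    (hcrit : ∃ (m : ℕ) (c : Fin (m + 1) → Fin N), 1 ≤ m ∧ IsWalk A m c (c 0) (c 0) ∧
      walkWeight A m c = (((m : ℝ) * lam : ℝ) : WithTop ℝ) ∧ ∃ t : Fin (m + 1), c t = i₀) :
    ∃ v : Fin N → ℝ,
      (∀ j : Fin N, (v j : WithTop ℝ) = kleeneStar (normalised A lam) j i₀) ∧
      (∀ k : Fin N,
        Finset.univ.inf (fun j => A k j + (v j : WithTop ℝ)) =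
          ((lam + v k : ℝ) : WithTop ℝ)) :=
  critical_column_of_kleene_star_is_eigenvector_general A hirr lam hlb i₀ hcrit
end

section
/- Let A be an irreducible N×N matrix over ℝ ∪ {+∞} whose graph contains at least one circuit, λ its minimum average circuit weight, Â the normalised matrix Â_{ij} = A_{ij} − λ, and Â* = ⊖_{k=0}^{N−1} Â^{⊙k}. Let E^cr be the set of edges belonging to some circuit of G(A) of average weight λ, and V^cr the set of nodes incident to such circuits. Then for i, j ∈ V^cr, there exists a ∈ ℝ with a + (Â*)_{ki} = (Â*)_{kj} for all k if and only if i and j belong to the same maximal strongly connected subgraph of the critical graph (V^cr, E^cr), i.e., i = j or there are walks from i to j and from j to i using only edges of E^cr. -/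
open scoped BigOperators

/-- A node is critical if it lies on a circuit of average weight `lam`. -/
def IsCriticalNode {N : ℕ} (A : Matrix (Fin N) (Fin N) (WithTop ℝ)) (lam : ℝ)
    (i : Fin N) : Prop :=
  ∃ (m : ℕ) (c : Fin (m + 1) → Fin N), 1 ≤ m ∧ IsWalk A m c (c 0) (c 0) ∧
    walkWeight A m c = (((m : ℝ) * lam : ℝ) : WithTop ℝ) ∧ ∃ t : Fin (m + 1), c t = i

/-- An edge from `j` to `i` is critical if it belongs to some circuit of average weight
`lam`. -/
def IsCriticalEdge {N : ℕ} (A : Matrix (Fin N) (Fin N) (WithTop ℝ)) (lam : ℝ)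
    (j i : Fin N) : Prop :=
  ∃ (m : ℕ) (c : Fin (m + 1) → Fin N), 1 ≤ m ∧ IsWalk A m c (c 0) (c 0) ∧
    walkWeight A m c = (((m : ℝ) * lam : ℝ) : WithTop ℝ) ∧
    ∃ t : Fin m, c t.castSucc = j ∧ c t.succ = i

/-- There is a walk from `i` to `j` using only critical edges. -/
def CriticalReach {N : ℕ} (A : Matrix (Fin N) (Fin N) (WithTop ℝ)) (lam : ℝ)
    (i j : Fin N) : Prop :=
  ∃ (l : ℕ) (v : Fin (l + 1) → Fin N), 1 ≤ l ∧ v 0 = i ∧ v (Fin.last l) = j ∧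
    ∀ t : Fin l, IsCriticalEdge A lam (v t.castSucc) (v t.succ)

/-!
The normalised matrix `Â` has no circuit of negative weight, so every walk can be shortened
to one with fewer than `N` steps without increasing its weight: `(Â*)_{ki}` is the least
weight of a walk from `i` to `k`. A critical edge `x → y` lies on a circuit of `Â`-weight `0`,
and the rest of that circuit is a walk back from `y` to `x` of weight `-Â_{yx}`; the two walks
give `(Â*)_{kx} = Â_{yx} + (Â*)_{ky}`, so columns are parallel along critical walks.
Conversely, if `a + (Â*)_{ki} = (Â*)_{kj}` for all `k`, then `k = i` and `k = j` give
`(Â*)_{ij} + (Â*)_{ji} = 0`, so optimal walks `i → j → i` form a circuit of weight `0`, and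
all of its edges are critical.
-/

lemma Relation.reflTransGen_of_forall_fin {α : Type*} {r : α → α → Prop} :
    ∀ {l : ℕ} {v : Fin (l + 1) → α}, (∀ t : Fin l, r (v t.castSucc) (v t.succ)) →
      Relation.ReflTransGen r (v 0) (v (Fin.last l))
  | 0, _, _ => .refl
  | l + 1, v, h => by
    have hinit : Relation.ReflTransGen r (v (0 : Fin (l + 1)).castSucc) (v (Fin.last l).castSucc) :=
      reflTransGen_of_forall_fin (v := fun t => v t.castSucc) fun t => by
        rw [← Fin.succ_castSucc]; exact h t.castSucc
    simpa only [Fin.castSucc_zero, Fin.succ_last] using hinit.tail (h (Fin.last l))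

namespace MinPlus

variable {N : ℕ}

/-- The weight of the walk `u 0 → u 1 → ⋯ → u l` in `G(B)`. Walks are indexed by `ℕ`
(only `u 0, …, u l` matter) since that makes cutting and concatenating them easy. -/
def seqWeight (B : Matrix (Fin N) (Fin N) (WithTop ℝ)) (l : ℕ) (u : ℕ → Fin N) :
    WithTop ℝ :=
  ∑ t ∈ Finset.range l, B (u (t + 1)) (u t)

lemma walkWeight_comp_val (B : Matrix (Fin N) (Fin N) (WithTop ℝ)) (l : ℕ) (u : ℕ → Fin N) :
    walkWeight B l (u ∘ Fin.val) = seqWeight B l u :=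
  Fin.sum_univ_eq_sum_range (fun t => B (u (t + 1)) (u t)) l

lemma seqWeight_congr (B : Matrix (Fin N) (Fin N) (WithTop ℝ)) {l : ℕ} {u v : ℕ → Fin N}
    (h : ∀ t ≤ l, u t = v t) : seqWeight B l u = seqWeight B l v :=
  Finset.sum_congr rfl fun t ht => by
    have := Finset.mem_range.1 ht
    rw [h t (by omega), h (t + 1) (by omega)]

lemma seqWeight_add (B : Matrix (Fin N) (Fin N) (WithTop ℝ)) (a b : ℕ) (u : ℕ → Fin N) :
    seqWeight B (a + b) u = seqWeight B a u + seqWeight B b (fun s => u (a + s)) := by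
  simp only [seqWeight, Finset.sum_range_add, add_assoc]

lemma seqWeight_one (B : Matrix (Fin N) (Fin N) (WithTop ℝ)) (u : ℕ → Fin N) :
    seqWeight B 1 u = B (u 1) (u 0) := by
  simp [seqWeight]

lemma ne_top_of_seqWeight_ne_top {B : Matrix (Fin N) (Fin N) (WithTop ℝ)} {l : ℕ}
    {u : ℕ → Fin N} (h : seqWeight B l u ≠ ⊤) {t : ℕ} (ht : t < l) :
    B (u (t + 1)) (u t) ≠ ⊤ :=
  fun hT => h (WithTop.sum_eq_top.2 ⟨t, Finset.mem_range.2 ht, hT⟩)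

lemma isWalk_comp_val {A : Matrix (Fin N) (Fin N) (WithTop ℝ)} {l : ℕ} {u : ℕ → Fin N}
    (h : seqWeight A l u ≠ ⊤) : IsWalk A l (u ∘ Fin.val) (u 0) (u l) :=
  ⟨rfl, rfl, fun t => ne_top_of_seqWeight_ne_top h t.isLt⟩

def seqAppend (l : ℕ) (u v : ℕ → Fin N) : ℕ → Fin N :=
  fun t => if t < l then u t else v (t - l)

lemma seqAppend_of_le {l : ℕ} {u v : ℕ → Fin N} (h : u l = v 0) {t : ℕ} (ht : t ≤ l) :
    seqAppend l u v t = u t := by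
  rcases ht.lt_or_eq with ht | rfl
  · simp [seqAppend, ht]
  · simp [seqAppend, h]

lemma seqAppend_add (l : ℕ) (u v : ℕ → Fin N) (t : ℕ) : seqAppend l u v (l + t) = v t := by
  simp [seqAppend]

lemma seqWeight_append (B : Matrix (Fin N) (Fin N) (WithTop ℝ)) {l₁ : ℕ} (l₂ : ℕ)
    {u v : ℕ → Fin N} (h : u l₁ = v 0) :
    seqWeight B (l₁ + l₂) (seqAppend l₁ u v) = seqWeight B l₁ u + seqWeight B l₂ v := by
  rw [seqWeight_add, seqWeight_congr B fun t ht => seqAppend_of_le h ht]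
  simp only [seqAppend_add]

lemma seqWeight_normalised (A : Matrix (Fin N) (Fin N) (WithTop ℝ)) (lam : ℝ) (l : ℕ)
    (u : ℕ → Fin N) :
    seqWeight (normalised A lam) l u =
      seqWeight A l u + (((l : ℝ) * -lam : ℝ) : WithTop ℝ) := by
  simp [seqWeight, normalised, Finset.sum_add_distrib, ← WithTop.coe_nsmul]

lemma seqWeight_normalised_eq_zero_iff {A : Matrix (Fin N) (Fin N) (WithTop ℝ)} {lam : ℝ}
    {l : ℕ} {u : ℕ → Fin N} :
    seqWeight (normalised A lam) l u = 0 ↔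
      seqWeight A l u = (((l : ℝ) * lam : ℝ) : WithTop ℝ) := by
  rw [seqWeight_normalised]
  cases seqWeight A l u with
  | top => exact iff_of_false (by simp) WithTop.top_ne_coe
  | coe w =>
    rw [← WithTop.coe_add, ← WithTop.coe_zero, WithTop.coe_inj, WithTop.coe_inj]
    constructor <;> intro h <;> linarith

lemma mpPow_le_seqWeight (B : Matrix (Fin N) (Fin N) (WithTop ℝ)) :
    ∀ (l : ℕ) (u : ℕ → Fin N), mpPow B l (u l) (u 0) ≤ seqWeight B l u
  | 0, u => by simp [mpPow, mpId, seqWeight]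
  | l + 1, u =>
    calc mpPow B (l + 1) (u (l + 1)) (u 0)
        ≤ B (u (l + 1)) (u l) + mpPow B l (u l) (u 0) :=
          Finset.inf_le (f := fun k => B _ k + mpPow B l k _) (Finset.mem_univ (u l))
      _ ≤ B (u (l + 1)) (u l) + seqWeight B l u := by gcongr; exact mpPow_le_seqWeight B l u
      _ = seqWeight B (l + 1) u := by
        rw [seqWeight, seqWeight, Finset.sum_range_succ, add_comm]

lemma exists_seqWeight_eq_mpPow (B : Matrix (Fin N) (Fin N) (WithTop ℝ)) :
    ∀ (l : ℕ) (i j : Fin N), mpPow B l i j ≠ ⊤ →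
      ∃ u : ℕ → Fin N, u 0 = j ∧ u l = i ∧ seqWeight B l u = mpPow B l i j
  | 0, i, j, h => by
    obtain rfl : i = j := by by_contra hij; exact h (by simp [mpPow, mpId, hij])
    exact ⟨fun _ => i, rfl, rfl, by simp [seqWeight, mpPow, mpId]⟩
  | l + 1, i, j, h => by
    obtain ⟨k, -, hk⟩ := Finset.exists_mem_eq_inf Finset.univ ⟨i, Finset.mem_univ i⟩
      fun k => B i k + mpPow B l k j
    have hk : mpPow B (l + 1) i j = B i k + mpPow B l k j := hk
    obtain ⟨u, hu0, hul, hu⟩ := exists_seqWeight_eq_mpPow B l k j fun hT => h (by simp [hk, hT])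
    let edge : ℕ → Fin N := fun t => if t = 0 then k else i
    have hjoin : u l = edge 0 := hul
    refine ⟨seqAppend l u edge, by rw [seqAppend_of_le hjoin l.zero_le, hu0],
      seqAppend_add l u edge 1, ?_⟩
    rw [seqWeight_append B 1 hjoin, hu, hk, seqWeight_one, add_comm]
    rfl

lemma exists_seqWeight_eq_kleeneStar {B : Matrix (Fin N) (Fin N) (WithTop ℝ)} {i j : Fin N}
    (h : kleeneStar B i j ≠ ⊤) :
    ∃ (l : ℕ) (u : ℕ → Fin N), u 0 = j ∧ u l = i ∧
      seqWeight B l u = kleeneStar B i j := by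
  obtain ⟨n, -, hn⟩ := Finset.exists_mem_eq_inf (Finset.range N)
    ⟨0, Finset.mem_range.2 i.pos⟩ fun n => mpPow B n i j
  change kleeneStar B i j = mpPow B n i j at hn
  rw [hn] at h ⊢
  exact ⟨n, exists_seqWeight_eq_mpPow B n i j h⟩

/-- For `B = Â` this says that `λ` is a lower bound for the average circuit weights of `A`. -/
def HasNonnegCircuits (B : Matrix (Fin N) (Fin N) (WithTop ℝ)) : Prop :=
  ∀ (l : ℕ) (u : ℕ → Fin N), 1 ≤ l → u 0 = u l → 0 ≤ seqWeight B l u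

lemma exists_seq_eq_of_card_le (u : ℕ → Fin N) {l : ℕ} (hl : N ≤ l) :
    ∃ a d, 0 < d ∧ a + d ≤ l ∧ u a = u (a + d) := by
  obtain ⟨x, y, hxy, hu⟩ := Fintype.exists_ne_map_eq_of_card_lt (fun t : Fin (N + 1) => u t)
    (by simp)
  rcases Nat.lt_or_gt_of_ne (Fin.val_ne_of_ne hxy) with h | h
  · exact ⟨x, y - x, by omega, by omega, by simpa [Nat.add_sub_cancel' h.le] using hu⟩
  · exact ⟨y, x - y, by omega, by omega, by simpa [Nat.add_sub_cancel' h.le] using hu.symm⟩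

lemma exists_shorter_seqWeight_le {B : Matrix (Fin N) (Fin N) (WithTop ℝ)}
    (hB : HasNonnegCircuits B) (u : ℕ → Fin N) {l : ℕ} (hl : N ≤ l) :
    ∃ l' < l, ∃ u' : ℕ → Fin N, u' 0 = u 0 ∧ u' l' = u l ∧
      seqWeight B l' u' ≤ seqWeight B l u := by
  obtain ⟨a, d, hd, hadl, hrep⟩ := exists_seq_eq_of_card_le u hl
  obtain ⟨r, rfl⟩ : ∃ r, l = a + d + r := ⟨l - (a + d), by omega⟩
  have hjoin : u a = u (a + d + 0) := hrep
  refine ⟨a + r, by omega, seqAppend a u fun s => u (a + d + s),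
    seqAppend_of_le hjoin a.zero_le, seqAppend_add a _ _ r, ?_⟩
  have hcircuit : 0 ≤ seqWeight B d fun s => u (a + s) := hB d _ hd (by simpa using hrep)
  rw [seqWeight_append B r hjoin, seqWeight_add, seqWeight_add]
  gcongr
  exact le_add_of_nonneg_right hcircuit

lemma kleeneStar_le_mpPow {B : Matrix (Fin N) (Fin N) (WithTop ℝ)} (hB : HasNonnegCircuits B)
    (l : ℕ) (i j : Fin N) : kleeneStar B i j ≤ mpPow B l i j := by
  induction l using Nat.strong_induction_on generalizing i j with
  | _ l ih =>
  by_cases hl : l < N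
  · exact Finset.inf_le (Finset.mem_range.2 hl)
  by_cases hT : mpPow B l i j = ⊤
  · exact hT ▸ le_top
  obtain ⟨u, rfl, rfl, hu⟩ := exists_seqWeight_eq_mpPow B l i j hT
  obtain ⟨l', hl', u', hu'0, hu'l, hle⟩ := exists_shorter_seqWeight_le hB u (not_lt.1 hl)
  calc kleeneStar B (u l) (u 0) ≤ mpPow B l' (u' l') (u' 0) := hu'0 ▸ hu'l ▸ ih l' hl' _ _
    _ ≤ seqWeight B l' u' := mpPow_le_seqWeight B l' u'
    _ ≤ mpPow B l (u l) (u 0) := hu ▸ hle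

lemma kleeneStar_diag {B : Matrix (Fin N) (Fin N) (WithTop ℝ)} (hB : HasNonnegCircuits B)
    (i : Fin N) : kleeneStar B i i = 0 := by
  refine le_antisymm ((kleeneStar_le_mpPow hB 0 i i).trans (by simp [mpPow, mpId])) ?_
  refine Finset.le_inf fun n _ => ?_
  by_cases hT : mpPow B n i i = ⊤
  · exact hT ▸ le_top
  obtain ⟨u, hu0, hun, hu⟩ := exists_seqWeight_eq_mpPow B n i i hT
  rw [← hu]
  rcases n.eq_zero_or_pos with rfl | hn
  · simp [seqWeight]
  · exact hB n u hn (hu0.trans hun.symm)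

lemma kleeneStar_le_seqWeight_add {B : Matrix (Fin N) (Fin N) (WithTop ℝ)}
    (hB : HasNonnegCircuits B) (l : ℕ) (u : ℕ → Fin N) (k : Fin N) :
    kleeneStar B k (u 0) ≤ seqWeight B l u + kleeneStar B k (u l) := by
  by_cases hT : kleeneStar B k (u l) = ⊤
  · simp [hT]
  obtain ⟨m, v, hv0, hvm, hv⟩ := exists_seqWeight_eq_kleeneStar hT
  have hjoin : u l = v 0 := hv0.symm
  calc kleeneStar B k (u 0)
      ≤ mpPow B (l + m) (seqAppend l u v (l + m)) (seqAppend l u v 0) := by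
        rw [seqAppend_add, seqAppend_of_le hjoin l.zero_le, hvm]
        exact kleeneStar_le_mpPow hB _ _ _
    _ ≤ seqWeight B (l + m) (seqAppend l u v) := mpPow_le_seqWeight B _ _
    _ = seqWeight B l u + kleeneStar B k (u l) := by rw [seqWeight_append B m hjoin, hv]

lemma hasNonnegCircuits_normalised {A : Matrix (Fin N) (Fin N) (WithTop ℝ)} {lam : ℝ}
    (hlb : ∀ (m : ℕ) (i : Fin N) (c : Fin (m + 1) → Fin N), 1 ≤ m → IsWalk A m c i i →
      (((m : ℝ) * lam : ℝ) : WithTop ℝ) ≤ walkWeight A m c) :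
    HasNonnegCircuits (normalised A lam) := by
  intro l u hl hu
  rw [seqWeight_normalised]
  by_cases hT : seqWeight A l u = ⊤
  · simp [hT]
  have hwalk : IsWalk A l (u ∘ Fin.val) (u 0) (u 0) := hu ▸ isWalk_comp_val hT
  have hle := hlb l (u 0) _ hl hwalk
  rw [walkWeight_comp_val] at hle
  calc (0 : WithTop ℝ)
        = (((l : ℝ) * lam : ℝ) : WithTop ℝ) + (((l : ℝ) * -lam : ℝ) : WithTop ℝ) := by
          rw [← WithTop.coe_add]; norm_num
    _ ≤ seqWeight A l u + (((l : ℝ) * -lam : ℝ) : WithTop ℝ) := by gcongr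

lemma isCriticalEdge_iff {A : Matrix (Fin N) (Fin N) (WithTop ℝ)} {lam : ℝ} {x y : Fin N} :
    IsCriticalEdge A lam x y ↔ ∃ (m : ℕ) (c : ℕ → Fin N), 1 ≤ m ∧ c 0 = c m ∧
      seqWeight (normalised A lam) m c = 0 ∧ ∃ s < m, c s = x ∧ c (s + 1) = y := by
  constructor
  · rintro ⟨m, c, hm, hwalk, hwt, s, rfl, rfl⟩
    have hc : (fun t => c (Fin.clamp t m)) ∘ Fin.val = c :=
      funext fun t => congrArg c (Fin.ext (by simp [Fin.clamp, t.is_le]))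
    refine ⟨m, fun t => c (Fin.clamp t m), hm, ?_, ?_, s, s.isLt, ?_, ?_⟩
    · simpa [Fin.clamp, Fin.last] using hwalk.2.1.symm
    · rw [seqWeight_normalised_eq_zero_iff, ← walkWeight_comp_val, hc, hwt]
    · exact congrFun hc s.castSucc
    · exact congrFun hc s.succ
  · rintro ⟨m, c, hm, hc, hz, s, hs, rfl, rfl⟩
    have hwt := seqWeight_normalised_eq_zero_iff.1 hz
    have hwalk : IsWalk A m (c ∘ Fin.val) (c 0) (c m) :=
      isWalk_comp_val (hwt ▸ WithTop.coe_ne_top)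
    rw [← hc] at hwalk
    exact ⟨m, c ∘ Fin.val, hm, hwalk, (walkWeight_comp_val A m c).trans hwt, ⟨s, hs⟩,
      rfl, rfl⟩

lemma exists_return_of_seqWeight_eq_zero {B : Matrix (Fin N) (Fin N) (WithTop ℝ)} {m : ℕ}
    {c : ℕ → Fin N} (hc : c 0 = c m) (hz : seqWeight B m c = 0) {s : ℕ} (hs : s < m) :
    ∃ r : ℝ, B (c (s + 1)) (c s) = r ∧ ∃ (L : ℕ) (P : ℕ → Fin N), P 0 = c (s + 1) ∧
      P L = c s ∧ seqWeight B L P = ((-r : ℝ) : WithTop ℝ) := by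
  obtain ⟨q, rfl⟩ : ∃ q, m = s + 1 + q := ⟨m - (s + 1), by omega⟩
  have hjoin : c (s + 1 + q) = c 0 := hc.symm
  have hsplit :
      seqWeight B s c + B (c (s + 1)) (c s) + seqWeight B q (fun t => c (s + 1 + t)) = 0 := by
    rw [← hz, seqWeight_add B (s + 1), seqWeight_add B s 1, seqWeight_one]
    simp
  have hfin := hsplit ▸ WithTop.zero_ne_top
  obtain ⟨⟨hhead, hedge⟩, htail⟩ :=
    And.imp_left WithTop.add_ne_top.1 (WithTop.add_ne_top.1 hfin)
  lift seqWeight B s c to ℝ using hhead with h hh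
  lift B (c (s + 1)) (c s) to ℝ using hedge with r hr
  lift seqWeight B q (fun t => c (s + 1 + t)) to ℝ using htail with t ht
  refine ⟨r, rfl, q + s, seqAppend q (fun t => c (s + 1 + t)) c,
    by rw [seqAppend_of_le (u := fun t => c (s + 1 + t)) hjoin q.zero_le, add_zero],
    seqAppend_add q _ c s, ?_⟩
  rw [seqWeight_append (u := fun t => c (s + 1 + t)) B s hjoin, ← ht, ← hh, ← WithTop.coe_add]
  have : h + r + t = 0 := by exact_mod_cast hsplit
  congr 1
  linarith

def ColumnsParallel (M : Matrix (Fin N) (Fin N) (WithTop ℝ)) (i j : Fin N) : Prop :=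
  ∃ a : ℝ, ∀ k, (a : WithTop ℝ) + M k i = M k j

lemma ColumnsParallel.refl (M : Matrix (Fin N) (Fin N) (WithTop ℝ)) (i : Fin N) :
    ColumnsParallel M i i :=
  ⟨0, fun k => by simp⟩

lemma ColumnsParallel.trans {M : Matrix (Fin N) (Fin N) (WithTop ℝ)} {i j l : Fin N}
    (hij : ColumnsParallel M i j) (hjl : ColumnsParallel M j l) : ColumnsParallel M i l := by
  obtain ⟨a, ha⟩ := hij
  obtain ⟨b, hb⟩ := hjl
  exact ⟨b + a, fun k => by rw [WithTop.coe_add, add_assoc, ha, hb]⟩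

lemma columnsParallel_of_isCriticalEdge {A : Matrix (Fin N) (Fin N) (WithTop ℝ)} {lam : ℝ}
    (hB : HasNonnegCircuits (normalised A lam)) {x y : Fin N} (h : IsCriticalEdge A lam x y) :
    ColumnsParallel (kleeneStar (normalised A lam)) x y := by
  obtain ⟨m, c, -, hc, hz, s, hs, rfl, rfl⟩ := isCriticalEdge_iff.1 h
  obtain ⟨r, hr, L, P, hP0, hPL, hP⟩ := exists_return_of_seqWeight_eq_zero hc hz hs
  refine ⟨-r, fun k => le_antisymm ?_ ?_⟩
  · have hforth := kleeneStar_le_seqWeight_add hB 1 (fun t => c (s + t)) k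
    simp only [seqWeight_one, add_zero] at hforth
    rw [hr] at hforth
    calc ((-r : ℝ) : WithTop ℝ) + kleeneStar (normalised A lam) k (c s)
        ≤ ((-r : ℝ) : WithTop ℝ) + (r + kleeneStar (normalised A lam) k (c (s + 1))) := by
          gcongr
      _ = kleeneStar (normalised A lam) k (c (s + 1)) := by
          rw [← add_assoc, ← WithTop.coe_add, neg_add_cancel, WithTop.coe_zero, zero_add]
  · simpa [hP0, hPL, hP] using kleeneStar_le_seqWeight_add hB L P k

lemma columnsParallel_of_criticalReach {A : Matrix (Fin N) (Fin N) (WithTop ℝ)} {lam : ℝ}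
    (hB : HasNonnegCircuits (normalised A lam)) {i j : Fin N} (h : CriticalReach A lam i j) :
    ColumnsParallel (kleeneStar (normalised A lam)) i j := by
  obtain ⟨l, v, -, rfl, rfl, hv⟩ := h
  have hreach := Relation.reflTransGen_of_forall_fin hv
  generalize v (Fin.last l) = j at hreach
  induction hreach with
  | refl => exact .refl _ _
  | tail _ hedge ih => exact ih.trans (columnsParallel_of_isCriticalEdge hB hedge)

lemma criticalReach_of_seqWeight_eq_zero {A : Matrix (Fin N) (Fin N) (WithTop ℝ)} {lam : ℝ}
    {m : ℕ} {c : ℕ → Fin N} (hc : c 0 = c m) (hz : seqWeight (normalised A lam) m c = 0)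
    {a b : ℕ} (hab : a < b) (hb : b ≤ m) : CriticalReach A lam (c a) (c b) := by
  have hedge : ∀ t < m, IsCriticalEdge A lam (c t) (c (t + 1)) := fun t ht =>
    isCriticalEdge_iff.2 ⟨m, c, by omega, hc, hz, t, ht, rfl, rfl⟩
  refine ⟨b - a, fun t => c (a + t), by omega, rfl, by simp; congr 1; omega, fun t => ?_⟩
  simpa [add_assoc] using hedge (a + t) (by omega)

lemma exists_closed_seqWeight_eq_zero {B : Matrix (Fin N) (Fin N) (WithTop ℝ)} {i j : Fin N}
    (h : kleeneStar B i j + kleeneStar B j i = 0) :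
    ∃ (n m : ℕ) (c : ℕ → Fin N), n ≤ m ∧ c 0 = i ∧ c n = j ∧ c m = i ∧
      seqWeight B m c = 0 := by
  obtain ⟨hji, hij⟩ := WithTop.add_ne_top.1 (h ▸ WithTop.zero_ne_top)
  obtain ⟨l₁, u, hu0, hul, hu⟩ := exists_seqWeight_eq_kleeneStar hij
  obtain ⟨l₂, v, hv0, hvl, hv⟩ := exists_seqWeight_eq_kleeneStar hji
  have hjoin : u l₁ = v 0 := hul.trans hv0.symm
  refine ⟨l₁, l₁ + l₂, seqAppend l₁ u v, by omega,
    by rw [seqAppend_of_le hjoin l₁.zero_le, hu0], by rw [seqAppend_of_le hjoin le_rfl, hul],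
    by rw [seqAppend_add, hvl], ?_⟩
  rw [seqWeight_append B l₂ hjoin, hu, hv, add_comm, h]

end MinPlus

open MinPlus

theorem columns_parallel_iff_same_critical_mscs_general {N : ℕ}
    (A : Matrix (Fin N) (Fin N) (WithTop ℝ))
    (lam : ℝ)
    (hlb : ∀ (m : ℕ) (i : Fin N) (c : Fin (m + 1) → Fin N), 1 ≤ m → IsWalk A m c i i →
      (((m : ℝ) * lam : ℝ) : WithTop ℝ) ≤ walkWeight A m c)
    (i j : Fin N) :
    (∃ a : ℝ, ∀ k : Fin N,
        ((a : ℝ) : WithTop ℝ) + kleeneStar (normalised A lam) k i =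
          kleeneStar (normalised A lam) k j) ↔
      (i = j ∨ (CriticalReach A lam i j ∧ CriticalReach A lam j i)) := by
  have hB := hasNonnegCircuits_normalised hlb
  refine ⟨fun ⟨a, ha⟩ => ?_, ?_⟩
  · rcases eq_or_ne i j with hij | hij
    · exact .inl hij
    have hsum : kleeneStar (normalised A lam) i j + kleeneStar (normalised A lam) j i = 0 := by
      rw [← ha i, kleeneStar_diag hB i, add_zero, ha j, kleeneStar_diag hB j]
    obtain ⟨n, m, c, hnm, hc0, hcn, hcm, hz⟩ := exists_closed_seqWeight_eq_zero hsum
    have hn : 0 < n := Nat.pos_of_ne_zero fun h => hij (hc0.symm.trans (h ▸ hcn))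
    have hnm : n < m := hnm.lt_of_ne fun h => hij (hcm.symm.trans (h ▸ hcn))
    have hc : c 0 = c m := hc0.trans hcm.symm
    refine .inr ⟨?_, ?_⟩
    · simpa [hc0, hcn] using criticalReach_of_seqWeight_eq_zero hc hz hn hnm.le
    · simpa [hcn, hcm] using criticalReach_of_seqWeight_eq_zero hc hz hnm le_rfl
  · rintro (rfl | ⟨hij, -⟩)
    · exact ColumnsParallel.refl _ i
    · exact columnsParallel_of_criticalReach hB hij

/-- for irreducible `A` (graph containing a circuit) with minimum average
circuit weight `lam`, and critical nodes `i, j`, the `i`-th and `j`-th columns of the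
Kleene star of the normalised matrix differ by a real constant if and only if `i` and `j`
belong to the same maximal strongly connected subgraph of the critical graph. -/
theorem columns_parallel_iff_same_critical_mscs {N : ℕ}
    (A : Matrix (Fin N) (Fin N) (WithTop ℝ))
    (hirr : ∀ i j : Fin N, ∃ (l : ℕ) (p : Fin (l + 1) → Fin N), IsWalk A l p i j)
    (lam : ℝ)
    (hlb : ∀ (m : ℕ) (i : Fin N) (c : Fin (m + 1) → Fin N), 1 ≤ m → IsWalk A m c i i →
      (((m : ℝ) * lam : ℝ) : WithTop ℝ) ≤ walkWeight A m c)
    (hmin : ∃ (m : ℕ) (i : Fin N) (c : Fin (m + 1) → Fin N), 1 ≤ m ∧ IsWalk A m c i i ∧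
      walkWeight A m c = (((m : ℝ) * lam : ℝ) : WithTop ℝ))
    (i j : Fin N) (hi : IsCriticalNode A lam i) (hj : IsCriticalNode A lam j) :
    (∃ a : ℝ, ∀ k : Fin N,
        ((a : ℝ) : WithTop ℝ) + kleeneStar (normalised A lam) k i =
          kleeneStar (normalised A lam) k j) ↔
      (i = j ∨ (CriticalReach A lam i j ∧ CriticalReach A lam j i)) :=
  columns_parallel_iff_same_critical_mscs_general A lam hlb i j
end
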